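/- The random-bit-selection quantizer B = b_α((Y+c)/(2c)) (with α geometric, P(α=j)=2^{-j}) and the random-threshold quantizer B' = 1(Y > R) (with R ~ Uniform[-c,c]) are statistically equivalent given the observation: for every y ∈ [-c, c], P(B = 1 | Y = y) = P(B' = 1 | Y = y) = (y + c)/(2c). -/

import Mathlib

/-!
With `x = (y + c) / (2c)`, the bit-selection quantizer outputs `1` exactly on the event
`α ∈ {j | b_j(x) = 1}`, whose probability is `∑ⱼ b_j(x) 2⁻ʲ`, i.e. the binary expansion of `x`.
The threshold quantizer outputs `1` exactly when `R < y`, which has probability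
`(y + c) / (2c)` under the uniform law on `[-c, c]`.
-/

open MeasureTheory ProbabilityTheory Set Filter Topology

/-- The `j`-th binary digit of `y ∈ [0,1]`, using the binary expansion that does not
terminate in all ones (with the convention `1 = 0.111...`). -/
noncomputable def binDigit (j : ℕ) (y : ℝ) : ℝ :=
  if y = 1 then 1 else ((⌊y * 2 ^ j⌋ % 2 : ℤ) : ℝ)

section BinaryDigits

variable {x : ℝ}

lemma binDigit_eq_zero_or_eq_one (j : ℕ) (y : ℝ) : binDigit j y = 0 ∨ binDigit j y = 1 := by
  unfold binDigit
  split_ifs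
  · exact Or.inr rfl
  · rcases Int.emod_two_eq ⌊y * 2 ^ j⌋ with h | h <;> simp [h]

lemma binDigit_zero_of_mem_Ico (hx : x ∈ Ico 0 1) : binDigit 0 x = 0 := by
  simp [binDigit, hx.2.ne, Int.floor_eq_zero_iff.2 hx]

/-- The shift: `Real.digits x 2 0` is the first digit after the binary point, whereas
`binDigit 0 x` is the integer part. -/
lemma binDigit_succ_eq_digits (hx : x ∈ Ico 0 1) (i : ℕ) :
    binDigit (i + 1) x = (Real.digits x 2 i : ℕ) := by
  have hfloor : (⌊x * 2 ^ (i + 1)⌋₊ : ℤ) = ⌊x * 2 ^ (i + 1)⌋ :=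
    Int.natCast_floor_eq_floor (by have := hx.1; positivity)
  simp only [binDigit, hx.2.ne, if_false, Real.digits, Fin.val_ofNat, ← hfloor]
  norm_cast

lemma hasSum_binDigit_mul (hx : x ∈ Ico 0 1) :
    HasSum (fun j => binDigit j x * 2⁻¹ ^ j) x := by
  refine (hasSum_nat_add_iff' 1).1 ?_
  simp only [Finset.sum_range_one, binDigit_zero_of_mem_Ico hx, zero_mul, sub_zero]
  have hterm : (fun i => binDigit (i + 1) x * 2⁻¹ ^ (i + 1)) =
      Real.ofDigitsTerm (Real.digits x 2) := by
    funext i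
    rw [binDigit_succ_eq_digits hx, Real.ofDigitsTerm, inv_pow]
    norm_cast
  rw [hterm]
  exact Real.hasSum_ofDigitsTerm_digits x one_lt_two hx

end BinaryDigits

section Quantizers

variable {Ω : Type*} [MeasurableSpace Ω] (μ : Measure Ω)

lemma measure_preimage_eq_tsum_indicator {β : Type*} [Countable β] [MeasurableSpace β]
    [MeasurableSingletonClass β] {f : Ω → β} (hf : Measurable f) (S : Set β) :
    μ (f ⁻¹' S) = ∑' b, S.indicator (fun b => μ (f ⁻¹' {b})) b := by
  rw [← tsum_subtype, tsum_measure_preimage_singleton S.to_countable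
    fun b _ => hf (measurableSet_singleton b)]

theorem measure_binDigit_eq_one_of_geometric [IsProbabilityMeasure μ] {α : Ω → ℕ}
    (hα : Measurable α) (hgeom : ∀ j : ℕ, 1 ≤ j → μ {ω | α ω = j} = ENNReal.ofReal (2⁻¹ ^ j))
    {x : ℝ} (hx : x ∈ Icc 0 1) :
    μ {ω | binDigit (α ω) x = 1} = ENNReal.ofReal x := by
  rcases hx.2.eq_or_lt with rfl | hx1
  · simp [binDigit]
  have hx' : x ∈ Ico 0 1 := ⟨hx.1, hx1⟩
  have hterm (j : ℕ) : {j | binDigit j x = 1}.indicator (fun j => μ (α ⁻¹' {j})) j =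
      ENNReal.ofReal (binDigit j x * 2⁻¹ ^ j) := by
    rcases Nat.eq_zero_or_pos j with rfl | hj
    · simp [binDigit_zero_of_mem_Ico hx']
    rcases binDigit_eq_zero_or_eq_one j x with h | h
    · simp [h]
    · rw [indicator_of_mem (by exact h), h, one_mul]
      exact hgeom j hj
  have hnonneg (j : ℕ) : 0 ≤ binDigit j x * 2⁻¹ ^ j := by
    rcases binDigit_eq_zero_or_eq_one j x with h | h <;> simp [h]
  have hsum := hasSum_binDigit_mul hx'
  change μ (α ⁻¹' {j | binDigit j x = 1}) = _
  rw [measure_preimage_eq_tsum_indicator μ hα, tsum_congr hterm,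
    ← ENNReal.ofReal_tsum_of_nonneg hnonneg hsum.summable, hsum.tsum_eq]

theorem measure_lt_of_map_eq_uniform {R : Ω → ℝ} (hR : Measurable R) {a b : ℝ} (hab : a < b)
    (hunif : μ.map R = (ENNReal.ofReal (b - a))⁻¹ • volume.restrict (Icc a b))
    {y : ℝ} (hy : y ∈ Icc a b) :
    μ {ω | R ω < y} = ENNReal.ofReal ((y - a) / (b - a)) := by
  have hIio : Iio y ∩ Icc a b = Ico a y := by
    ext t
    simp only [mem_inter_iff, mem_Iio, mem_Icc, mem_Ico]
    constructor
    · rintro ⟨hty, hat, -⟩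
      exact ⟨hat, hty⟩
    · rintro ⟨hat, hty⟩
      exact ⟨hty, hat, hty.le.trans hy.2⟩
  change μ (R ⁻¹' Iio y) = _
  rw [← Measure.map_apply hR measurableSet_Iio, hunif, Measure.smul_apply,
    Measure.restrict_apply measurableSet_Iio, hIio, Real.volume_Ico, smul_eq_mul,
    ENNReal.ofReal_div_of_pos (sub_pos.2 hab), ENNReal.div_eq_inv_mul]

end Quantizers

theorem stmt16 {Ω : Type*} [MeasureSpace Ω] [IsProbabilityMeasure (ℙ : Measure Ω)]
    (c : ℝ) (hc : 0 < c) (α : Ω → ℕ) (R : Ω → ℝ) (hα : Measurable α) (hR : Measurable R)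
    (hgeom : ∀ j : ℕ, 1 ≤ j → ℙ {ω | α ω = j} = ENNReal.ofReal ((2 : ℝ)⁻¹ ^ j))
    (hRunif : Measure.map R ℙ = (ENNReal.ofReal (2 * c))⁻¹ • volume.restrict (Set.Icc (-c) c)) :
    ∀ y ∈ Set.Icc (-c) c,
      ℙ {ω | binDigit (α ω) ((y + c) / (2 * c)) = 1} = ENNReal.ofReal ((y + c) / (2 * c)) ∧
      ℙ {ω | y > R ω} = ENNReal.ofReal ((y + c) / (2 * c)) := by
  intro y hy
  have h2c : c - -c = 2 * c := by ring
  have hx : (y + c) / (2 * c) ∈ Icc 0 1 :=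
    ⟨div_nonneg (by linarith [hy.1]) (by positivity),
      (div_le_one (by positivity)).2 (by linarith [hy.2])⟩
  refine ⟨measure_binDigit_eq_one_of_geometric ℙ hα hgeom hx, ?_⟩
  have hunif := measure_lt_of_map_eq_uniform ℙ hR (neg_lt_self hc) (h2c ▸ hRunif) hy
  rwa [h2c, sub_neg_eq_add] at hunif
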